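/- (Gumbel-Max / Proposition A.1.) Let θ₁, …, θ_N be real numbers and let G₁, …, G_N be independent real random variables on a probability space, each with law equal to the probability measure on ℝ with cumulative distribution function x ↦ exp(-exp(-x)) (the standard Gumbel distribution). Then for every index k ∈ {1, …, N}, the probability P(θ_k + G_k > θ_i + G_i for all i ≠ k) equals exp(θ_k) / Σ_{i=1}^N exp(θ_i), i.e., the index of the maximum of the Gumbel-perturbed log-probabilities is distributed according to the softmax (categorical) distribution of θ. -/

import Mathlib

open MeasureTheory ProbabilityTheory Filter Set

/-- The cumulative distribution function of the standard Gumbel distribution,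
bundled as a Stieltjes function. -/
noncomputable def stdGumbelCDF : StieltjesFunction ℝ where
  toFun := fun x : ℝ => Real.exp (-Real.exp (-x))
  mono' := fun _ _ hab =>
    Real.exp_le_exp.mpr (neg_le_neg (Real.exp_le_exp.mpr (neg_le_neg hab)))
  right_continuous' := fun x =>
    ((Real.continuous_exp.comp (Real.continuous_exp.comp continuous_neg).neg).continuousAt
      (x := x)).continuousWithinAt

namespace GumbelAux

lemma hasDerivAt_aux (c : ℝ) (x : ℝ) :
    HasDerivAt (fun x : ℝ => Real.exp (-(c * Real.exp (-x))))
      (c * Real.exp (-x) * Real.exp (-(c * Real.exp (-x)))) x := by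
  have h0 : HasDerivAt (fun x : ℝ => Real.exp (-x)) (-Real.exp (-x)) x := by
    simpa [Function.comp_def] using (Real.hasDerivAt_exp (-x)).comp x (hasDerivAt_neg x)
  have h1 : HasDerivAt (fun x : ℝ => -(c * Real.exp (-x))) (c * Real.exp (-x)) x := by
    have := (h0.const_mul c).neg; rw [mul_neg, neg_neg] at this; exact this
  simpa [mul_comm, Function.comp_def] using (Real.hasDerivAt_exp _).comp x h1

lemma cont_aux (c : ℝ) : Continuous fun x : ℝ => Real.exp (-(c * Real.exp (-x))) := by
  continuity

lemma tendsto_exp_neg_atBot : Tendsto (fun x : ℝ => Real.exp (-x)) atTop (nhds 0) :=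
  Real.tendsto_exp_atBot.comp tendsto_neg_atTop_atBot

lemma tendsto_exp_neg_atTop : Tendsto (fun x : ℝ => Real.exp (-x)) atBot atTop :=
  Real.tendsto_exp_atTop.comp tendsto_neg_atBot_atTop

lemma tendsto_aux_top (c : ℝ) :
    Tendsto (fun x : ℝ => Real.exp (-(c * Real.exp (-x)))) atTop (nhds 1) := by
  have : Tendsto (fun x : ℝ => -(c * Real.exp (-x))) atTop (nhds 0) := by
    simpa using ((tendsto_exp_neg_atBot.const_mul c).neg)
  simpa [Function.comp_def] using (Real.continuous_exp.tendsto 0).comp this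

lemma tendsto_aux_bot {c : ℝ} (hc : 0 < c) :
    Tendsto (fun x : ℝ => Real.exp (-(c * Real.exp (-x)))) atBot (nhds 0) := by
  have : Tendsto (fun x : ℝ => -(c * Real.exp (-x))) atBot atBot := by
    exact tendsto_neg_atTop_atBot.comp (tendsto_exp_neg_atTop.const_mul_atTop hc)
  exact Real.tendsto_exp_atBot.comp this

noncomputable def gpdf (x : ℝ) : ℝ := Real.exp (-x) * Real.exp (-Real.exp (-x))

lemma gpdf_nonneg (x : ℝ) : 0 ≤ gpdf x :=
  mul_nonneg (Real.exp_nonneg _) (Real.exp_nonneg _)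

lemma gpdf_cont : Continuous gpdf := by unfold gpdf; continuity

lemma stdF_eq (x : ℝ) : stdGumbelCDF x = Real.exp (-(1 * Real.exp (-x))) := by
  simp [stdGumbelCDF]

lemma stdF_coe : (stdGumbelCDF : ℝ → ℝ) = fun x => Real.exp (-(1 * Real.exp (-x))) :=
  funext stdF_eq

lemma stdF_cont : Continuous (stdGumbelCDF : ℝ → ℝ) := by
  rw [stdF_coe]; exact cont_aux 1

lemma stdF_tendsto_bot : Tendsto stdGumbelCDF atBot (nhds 0) := by
  rw [stdF_coe]; exact tendsto_aux_bot one_pos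

lemma stdF_tendsto_top : Tendsto stdGumbelCDF atTop (nhds 1) := by
  rw [stdF_coe]; exact tendsto_aux_top 1

instance : IsProbabilityMeasure stdGumbelCDF.measure :=
  StieltjesFunction.isProbabilityMeasure _ stdF_tendsto_bot stdF_tendsto_top

lemma stdF_hasDeriv (x : ℝ) : HasDerivAt stdGumbelCDF (gpdf x) x := by
  rw [stdF_coe]
  simpa [gpdf] using hasDerivAt_aux 1 x

lemma density :
    stdGumbelCDF.measure = volume.withDensity (fun x => ENNReal.ofReal (gpdf x)) := by
  refine Measure.ext_of_Ioc _ _ (fun a b hab => ?_)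
  rw [StieltjesFunction.measure_Ioc, withDensity_apply _ measurableSet_Ioc,
    ← ofReal_integral_eq_lintegral_ofReal (gpdf_cont.integrableOn_Ioc)
      (Eventually.of_forall gpdf_nonneg)]
  congr 1
  symm
  rw [← intervalIntegral.integral_of_le hab.le]
  exact intervalIntegral.integral_eq_sub_of_hasDerivAt
    (fun x _ => stdF_hasDeriv x) (gpdf_cont.intervalIntegrable a b)

lemma measure_Iio (x : ℝ) :
    stdGumbelCDF.measure (Iio x) = ENNReal.ofReal (Real.exp (-Real.exp (-x))) := by
  have hsing : stdGumbelCDF.measure {x} = 0 := by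
    rw [StieltjesFunction.measure_singleton]
    have : Function.leftLim stdGumbelCDF x = stdGumbelCDF x :=
      leftLim_eq_of_tendsto
        ((stdF_cont.tendsto x).mono_left nhdsWithin_le_nhds)
    simp [this]
  have : Iio x = Iic x \ {x} := by ext y; simp [lt_iff_le_and_ne]
  rw [this, measure_diff_null hsing,
    StieltjesFunction.measure_Iic _ stdF_tendsto_bot]
  simp [stdGumbelCDF]

lemma lintegral_gpdf : ∫⁻ x, ENNReal.ofReal (gpdf x) = 1 := by
  have h := density
  have : (volume.withDensity (fun x => ENNReal.ofReal (gpdf x))) univ = 1 := by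
    rw [← h]; exact measure_univ
  rwa [withDensity_apply _ MeasurableSet.univ, Measure.restrict_univ] at this

lemma integrable_gpdf : Integrable gpdf := by
  refine ⟨gpdf_cont.aestronglyMeasurable, ?_⟩
  rw [hasFiniteIntegral_iff_ofReal (Eventually.of_forall gpdf_nonneg)]
  rw [lintegral_gpdf]
  exact ENNReal.one_lt_top

lemma key (s : ℝ) (hs : 0 ≤ s) :
    ∫⁻ a, ENNReal.ofReal (Real.exp (-(s * Real.exp (-a)))) ∂stdGumbelCDF.measure
      = ENNReal.ofReal (1 / (s + 1)) := by
  have hc : (0:ℝ) < s + 1 := by linarith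
  set h : ℝ → ℝ := fun a => Real.exp (-a) * Real.exp (-((s + 1) * Real.exp (-a))) with hh
  have hcont : Continuous h := by unfold h; fun_prop
  have hpt : ∀ a, gpdf a * Real.exp (-(s * Real.exp (-a))) = h a := by
    intro a
    unfold h
    unfold gpdf
    rw [mul_assoc, ← Real.exp_add]
    ring_nf
  have hint : Integrable h := by
    refine integrable_gpdf.mono hcont.aestronglyMeasurable (Eventually.of_forall fun a => ?_)
    have h1 : 0 ≤ h a := mul_nonneg (Real.exp_nonneg _) (Real.exp_nonneg _)
    rw [Real.norm_eq_abs, Real.norm_eq_abs, abs_of_nonneg h1, abs_of_nonneg (gpdf_nonneg a)]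
    unfold h; unfold gpdf
    refine mul_le_mul_of_nonneg_left (Real.exp_le_exp.mpr ?_) (Real.exp_nonneg _)
    have := Real.exp_nonneg (-a)
    nlinarith
  have hder : ∀ a, HasDerivAt (fun a => Real.exp (-((s + 1) * Real.exp (-a))) / (s + 1)) (h a) a := by
    intro a
    have := (hasDerivAt_aux (s + 1) a).div_const (s + 1)
    refine this.congr_deriv ?_
    simp only [hh]
    field_simp
  have hbot : Tendsto (fun a => Real.exp (-((s + 1) * Real.exp (-a))) / (s + 1)) atBot (nhds 0) := by
    simpa using (tendsto_aux_bot hc).div_const (s + 1)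
  have htop : Tendsto (fun a => Real.exp (-((s + 1) * Real.exp (-a))) / (s + 1)) atTop
      (nhds (1 / (s + 1))) := by
    simpa [one_div] using (tendsto_aux_top (s + 1)).div_const (s + 1)
  have hI : ∫ a, h a = 1 / (s + 1) := by
    rw [MeasureTheory.integral_of_hasDerivAt_of_tendsto hder hint hbot htop]
    simp
  rw [density, lintegral_withDensity_eq_lintegral_mul _
      gpdf_cont.measurable.ennreal_ofReal
      (cont_aux s).measurable.ennreal_ofReal]
  have : ∀ a, (((fun x => ENNReal.ofReal (gpdf x)) *
        fun a => ENNReal.ofReal (Real.exp (-(s * Real.exp (-a))))) a)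
      = ENNReal.ofReal (h a) := by
    intro a
    simp only [Pi.mul_apply]
    rw [← ENNReal.ofReal_mul (gpdf_nonneg a), hpt a]
  rw [lintegral_congr this, ← ofReal_integral_eq_lintegral_ofReal hint
      (Eventually.of_forall fun a => mul_nonneg (Real.exp_nonneg _) (Real.exp_nonneg _)), hI]

end GumbelAux

open GumbelAux

/-- Gumbel-Max proposition: the argmax of Gumbel-perturbed log-probabilities is
distributed according to the softmax of the log-probabilities. -/
theorem gumbel_max
    {Ω : Type*} [MeasurableSpace Ω] (P : Measure Ω) [IsProbabilityMeasure P]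
    {N : ℕ} (θ : Fin N → ℝ) (G : Fin N → Ω → ℝ)
    (hmeas : ∀ i, Measurable (G i))
    (hindep : iIndepFun G P)
    (hlaw : ∀ i, Measure.map (G i) P = stdGumbelCDF.measure)
    (k : Fin N) :
    P {ω | ∀ i, i ≠ k → θ i + G i ω < θ k + G k ω} =
      ENNReal.ofReal (Real.exp (θ k) / ∑ i, Real.exp (θ i)) := by
  classical
  set μ := stdGumbelCDF.measure with hμdef
  have hG : Measurable fun ω (i : Fin N) => G i ω := measurable_pi_lambda _ hmeas
  have hmap : Measure.map (fun ω i => G i ω) P = Measure.pi (fun _ : Fin N => μ) := by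
    refine (Measure.pi_eq fun s hs => ?_).symm
    rw [Measure.map_apply hG (MeasurableSet.univ_pi hs)]
    have hpre : (fun ω i => G i ω) ⁻¹' (Set.pi Set.univ s) = ⋂ i ∈ Finset.univ, G i ⁻¹' s i := by
      ext ω; simp [Set.mem_pi]
    rw [hpre, hindep.measure_inter_preimage_eq_mul Finset.univ (fun i _ => hs i)]
    exact Finset.prod_congr rfl fun i _ => by
      rw [← Measure.map_apply (hmeas i) (hs i), hlaw i]
  set A : Set (Fin N → ℝ) := {x | ∀ i, i ≠ k → θ i + x i < θ k + x k} with hAdef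
  have hA : MeasurableSet A := by
    have : A = ⋂ i, ⋂ (_ : i ≠ k), {x : Fin N → ℝ | θ i + x i < θ k + x k} := by
      ext x; simp [hAdef]
    rw [this]
    refine MeasurableSet.iInter fun i => MeasurableSet.iInter fun _ => ?_
    exact measurableSet_lt (measurable_const.add (measurable_pi_apply i))
      (measurable_const.add (measurable_pi_apply k))
  have hPA : P {ω | ∀ i, i ≠ k → θ i + G i ω < θ k + G k ω}
      = Measure.pi (fun _ : Fin N => μ) A := by
    rw [← hmap, Measure.map_apply hG hA]
    rfl
  haveI hu : Unique {i : Fin N // i = k} := ⟨⟨⟨k, rfl⟩⟩, fun x => Subtype.ext x.2⟩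
  set e := MeasurableEquiv.piEquivPiSubtypeProd (fun _ : Fin N => ℝ) (fun i => i = k) with he
  have hmp := measurePreserving_piEquivPiSubtypeProd (fun _ : Fin N => μ) (fun i => i = k)
  set s : ℝ := ∑ i ∈ Finset.univ.erase k, Real.exp (θ i - θ k) with hsdef
  have hs0 : 0 ≤ s := Finset.sum_nonneg fun i _ => (Real.exp_pos _).le
  have hsplit : Measure.pi (fun _ : Fin N => μ) A
      = ((Measure.pi fun _ : {i : Fin N // i = k} => μ).prod
          (Measure.pi fun _ : {i : Fin N // ¬ i = k} => μ)) (e.symm ⁻¹' A) := by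
    rw [← (hmp.symm e).map_eq, Measure.map_apply e.symm.measurable hA]
    congr!
  have hsymm_apply : ∀ (u : {i : Fin N // i = k} → ℝ) (b : {i : Fin N // ¬ i = k} → ℝ)
      (i : Fin N), e.symm (u, b) i = if h : i = k then u ⟨i, h⟩ else b ⟨i, h⟩ := by
    intro u b i; rfl
  have hslice : ∀ u : {i : Fin N // i = k} → ℝ,
      (Measure.pi fun _ : {i : Fin N // ¬ i = k} => μ) (Prod.mk u ⁻¹' (e.symm ⁻¹' A))
        = ENNReal.ofReal (Real.exp (-(s * Real.exp (-(u default))))) := by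
    intro u
    have hud : u ⟨k, rfl⟩ = u default := congrArg u (Subsingleton.elim _ _)
    have hset : Prod.mk u ⁻¹' (e.symm ⁻¹' A)
        = Set.pi Set.univ (fun j : {i : Fin N // ¬ i = k} =>
            Set.Iio (θ k + u default - θ j.1)) := by
      ext b
      simp only [Set.mem_preimage, hAdef, Set.mem_setOf_eq, Set.mem_pi, Set.mem_univ,
        Set.mem_Iio, true_implies]
      constructor
      · intro hb j
        have h1 := hb j.1 j.2
        rw [hsymm_apply, hsymm_apply, dif_neg j.2, dif_pos rfl, hud] at h1
        have : b ⟨j.1, j.2⟩ = b j := congrArg b (Subtype.eta _ _)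
        rw [this] at h1
        linarith
      · intro hb i hi
        have h1 := hb ⟨i, hi⟩
        rw [hsymm_apply, hsymm_apply, dif_neg hi, dif_pos rfl, hud]
        linarith
    rw [hset, Measure.pi_pi]
    have : ∀ j : {i : Fin N // ¬ i = k},
        μ (Set.Iio (θ k + u default - θ j.1))
          = ENNReal.ofReal (Real.exp (-Real.exp (-(θ k + u default - θ j.1)))) := fun j =>
      GumbelAux.measure_Iio _
    rw [Finset.prod_congr rfl fun j _ => this j,
      ← ENNReal.ofReal_prod_of_nonneg (fun j _ => (Real.exp_nonneg _)),
      ← Real.exp_sum]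
    congr 1
    have hterm : ∀ j : {i : Fin N // ¬ i = k},
        -Real.exp (-(θ k + u default - θ j.1))
          = -(Real.exp (θ j.1 - θ k) * Real.exp (-(u default))) := by
      intro j
      rw [← Real.exp_add]
      ring_nf
    rw [Finset.sum_congr rfl fun j _ => hterm j, Finset.sum_neg_distrib, ← Finset.sum_mul]
    have hs' : s = ∑ j : {i : Fin N // ¬ i = k}, Real.exp (θ j.1 - θ k) :=
      Finset.sum_subtype _ (by simp) _
    rw [hs']
  haveI : IsProbabilityMeasure μ := by rw [hμdef]; infer_instance
  rw [hPA, hsplit, Measure.prod_apply (e.symm.measurable hA), lintegral_congr hslice]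
  have hpu := measurePreserving_piUnique (fun _ : {i : Fin N // i = k} => μ)
  have hφ : Measurable fun x : ℝ => ENNReal.ofReal (Real.exp (-(s * Real.exp (-x)))) :=
    (cont_aux s).measurable.ennreal_ofReal
  have houter : ∫⁻ u, ENNReal.ofReal (Real.exp (-(s * Real.exp (-(u default)))))
        ∂(Measure.pi fun _ : {i : Fin N // i = k} => μ)
      = ∫⁻ x, ENNReal.ofReal (Real.exp (-(s * Real.exp (-x)))) ∂μ := by
    have h1 := lintegral_map (μ := Measure.pi fun _ : {i : Fin N // i = k} => μ) hφ
      (MeasurableEquiv.measurable (MeasurableEquiv.piUnique (fun _ : {i : Fin N // i = k} => ℝ)))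
    rw [hpu.map_eq] at h1
    exact h1.symm
  rw [houter, hμdef, key s hs0]
  congr 1
  have hsum : s + 1 = (∑ i, Real.exp (θ i)) / Real.exp (θ k) := by
    have h1 : s + Real.exp (θ k - θ k) = ∑ i, Real.exp (θ i - θ k) :=
      Finset.sum_erase_add _ _ (Finset.mem_univ k)
    simp only [sub_self, Real.exp_zero] at h1
    rw [h1, Finset.sum_congr rfl fun i _ => Real.exp_sub (θ i) (θ k), ← Finset.sum_div]
  rw [hsum, one_div_div]
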